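/- arXiv:1610.03669 — 5 statements merged into one kernel-verified Lean document; each statement's English description precedes it below -/
import Mathlib

section
/- Let G be a non-cyclic finite group of order n > 1 and let q be the smallest prime divisor of n. Then q·ψ(G) ≤ (n-1)·n + q, and consequently q·ψ(G) < n². -/
/-- `psi G` is the sum of the orders of all elements of the finite group `G`. -/
noncomputable def psi (G : Type*) [Group G] [Fintype G] : ℕ := ∑ x : G, orderOf x

lemma minFac_mul_le_of_proper_dvd {n d : ℕ} (hn : 0 < n) (hd : d ∣ n) (hdn : d ≠ n) :
    n.minFac * d ≤ n := by
  obtain ⟨m, hm⟩ := hd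
  have hm0 : m ≠ 0 := by rintro rfl; simp at hm; omega
  have hm1 : m ≠ 1 := by rintro rfl; simp at hm; exact hdn hm.symm
  have h2 : 2 ≤ m := by omega
  have hmf : m.minFac ∣ n := (Nat.minFac_dvd m).trans ⟨d, by rw [hm, mul_comm]⟩
  have h3 : n.minFac ≤ m.minFac :=
    Nat.minFac_le_of_dvd (Nat.minFac_prime hm1).two_le hmf
  have h4 : m.minFac ≤ m := Nat.minFac_le (by omega)
  calc n.minFac * d ≤ m * d := Nat.mul_le_mul_right d (h3.trans h4)
    _ = n := by rw [hm, mul_comm]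

theorem sum_orders_noncyclic_trivial_bound {G : Type*} [Group G] [Fintype G] (n : ℕ)
    (hn : Fintype.card G = n) (h1 : 1 < n) (hG : ¬ IsCyclic G) :
    n.minFac * psi G ≤ (n - 1) * n + n.minFac ∧ n.minFac * psi G < n ^ 2 := by
  have hn0 : 0 < n := by omega
  have key : ∀ x : G, x ≠ 1 → n.minFac * orderOf x ≤ n := by
    intro x hx
    have hdvd : orderOf x ∣ n := hn ▸ orderOf_dvd_card
    have hne : orderOf x ≠ n := by
      intro h
      exact hG (isCyclic_of_orderOf_eq_card x (by rw [Nat.card_eq_fintype_card, hn, h]))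
    exact minFac_mul_le_of_proper_dvd hn0 hdvd hne
  have hmain : n.minFac * psi G ≤ (n - 1) * n + n.minFac := by
    classical
    rw [psi, Finset.mul_sum]
    rw [← Finset.sum_erase_add _ _ (Finset.mem_univ (1 : G))]
    have h1' : n.minFac * orderOf (1 : G) = n.minFac := by simp
    rw [h1']
    have hb : ∑ x ∈ Finset.univ.erase (1 : G), n.minFac * orderOf x ≤ (n - 1) * n := by
      calc ∑ x ∈ Finset.univ.erase (1 : G), n.minFac * orderOf x
          ≤ ∑ _x ∈ Finset.univ.erase (1 : G), n :=
            Finset.sum_le_sum (fun x hx => key x (Finset.ne_of_mem_erase hx))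
        _ = (n - 1) * n := by
            rw [Finset.sum_const, Finset.card_erase_of_mem (Finset.mem_univ _),
              Finset.card_univ, hn, smul_eq_mul]
    omega
  refine ⟨hmain, ?_⟩
  have hqn : n.minFac < n := by
    have hle : n.minFac ≤ n := Nat.minFac_le hn0
    rcases lt_or_eq_of_le hle with h | h
    · exact h
    · exfalso
      have hp : n.Prime := h ▸ Nat.minFac_prime (by omega)
      have : Fact n.Prime := ⟨hp⟩
      exact hG (isCyclic_of_prime_card (by rw [Nat.card_eq_fintype_card, hn]))
  obtain ⟨m, rfl⟩ : ∃ m, n = m + 1 := ⟨n - 1, by omega⟩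
  have h2 : (m + 1) ^ 2 = m * (m + 1) + (m + 1) := by ring
  have h3 : (m + 1 - 1) * (m + 1) = m * (m + 1) := by simp
  omega
end

section
/- Let G be a finite group satisfying G = P ⋊ F, where P is a normal cyclic p-group for some prime p, F is a complement of P with |F| coprime to p. If u ∈ P and x ∈ F does not centralize P, then the order of ux equals the order of x. -/
/-!
Conjugation by `x` restricts to an automorphism `σ` of `P` with `σ ^ orderOf x = 1`. On the cyclic
group `P` every automorphism is a power map `g ↦ g ^ m`; if it fixes a nontrivial element then
`m ≡ 1 [ZMOD p]`, so `m ^ p ^ k ≡ 1 [ZMOD p ^ (k + 1)]` for all `k` and `σ` has `p`-power order.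
Since `orderOf x` is prime to `p` and `σ ≠ 1`, the action of `x` on `P` is fixed-point-free.
Now `w = (u * x) ^ orderOf x` lies in `P` (its image in `G ⧸ P` is `x ^ orderOf x = 1`) and
commutes with `u * x` and, `P` being abelian, with `u`, hence with `x`; so `w = 1`.
Conversely, `(u * x) ^ k = 1` puts `x ^ k` in `P ⊓ F = ⊥`.
-/

theorem Subgroup.mul_pow_mem_iff {G : Type*} [Group G] {P : Subgroup G} [P.Normal] {u : G}
    (hu : u ∈ P) (x : G) (j : ℕ) : (u * x) ^ j ∈ P ↔ x ^ j ∈ P := by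
  simp only [← QuotientGroup.eq_one_iff, QuotientGroup.mk_pow, QuotientGroup.mk_mul,
    (QuotientGroup.eq_one_iff u).2 hu, one_mul]

theorem MulAut.pow_apply_eq_zpow {Q : Type*} [Group Q] {σ : MulAut Q} {m : ℤ}
    (hσ : ∀ g, σ g = g ^ m) (j : ℕ) (g : Q) : (σ ^ j) g = g ^ m ^ j := by
  induction j with
  | zero => simp
  | succ j ih => rw [pow_succ', MulAut.mul_apply, ih, hσ, ← zpow_mul, pow_succ]

theorem IsPGroup.exists_mulAut_pow_prime_pow_eq_one {p : ℕ} (hp : p.Prime) {Q : Type*} [Group Q]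
    [Finite Q] [IsCyclic Q] (hQ : IsPGroup p Q) {σ : MulAut Q} {v : Q} (hv : v ≠ 1)
    (hσv : σ v = v) : ∃ k, σ ^ p ^ k = 1 := by
  obtain ⟨m, hm⟩ := MonoidHom.map_cyclic σ.toMonoidHom
  have hpm : (p : ℤ) ∣ m - 1 := by
    have hvm : (orderOf v : ℤ) ∣ m - 1 := by
      rw [orderOf_dvd_iff_zpow_eq_one, zpow_sub_one, ← hm v]
      exact mul_inv_eq_one.2 hσv
    obtain ⟨j, hj⟩ := hQ v
    obtain ⟨i, -, hi⟩ := (Nat.dvd_prime_pow hp).1 (orderOf_dvd_of_pow_eq_one hj)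
    have hi0 : i ≠ 0 := by
      rintro rfl
      exact hv (orderOf_eq_one_iff.1 hi)
    exact dvd_trans (by exact_mod_cast hi ▸ dvd_pow_self p hi0) hvm
  obtain ⟨k, hk⟩ := isPGroup_iff_exists_orderOf_dvd_pow.1 hQ
  refine ⟨k, MulEquiv.ext fun g ↦ ?_⟩
  have hpk : (p : ℤ) ^ (k + 1) ∣ m ^ p ^ k - 1 := by
    simpa using dvd_sub_pow_of_dvd_sub (R := ℤ) (b := 1) (by simpa using hpm) k
  have hg : (orderOf g : ℤ) ∣ m ^ p ^ k - 1 :=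
    dvd_trans (by exact_mod_cast (hk g).trans (pow_dvd_pow p k.le_succ)) hpk
  rw [MulAut.pow_apply_eq_zpow hm, MulAut.one_apply, ← mul_inv_eq_one, ← zpow_sub_one]
  exact orderOf_dvd_iff_zpow_eq_one.1 hg

theorem IsPGroup.mulAut_eq_one_of_apply_eq_self {p : ℕ} (hp : p.Prime) {Q : Type*} [Group Q]
    [Finite Q] [IsCyclic Q] (hQ : IsPGroup p Q) {σ : MulAut Q} {n : ℕ} (hσn : σ ^ n = 1)
    (hnp : n.Coprime p) {v : Q} (hv : v ≠ 1) (hσv : σ v = v) : σ = 1 := by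
  obtain ⟨k, hk⟩ := hQ.exists_mulAut_pow_prime_pow_eq_one hp hv hσv
  simpa [(hnp.pow_right k).gcd_eq_one] using pow_gcd_eq_one.2 ⟨hσn, hk⟩

theorem IsPGroup.eq_one_of_commute_of_not_centralizing {G : Type*} [Group G] {p : ℕ}
    (hp : p.Prime) {P : Subgroup G} [P.Normal] [Finite P] [IsCyclic P] (hPp : IsPGroup p P)
    {x : G} (hxp : (orderOf x).Coprime p) (hnc : ¬ ∀ v ∈ P, x * v = v * x) {w : G}
    (hwP : w ∈ P) (hxw : Commute x w) : w = 1 := by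
  by_contra hw
  have hσ : MulAut.conjNormal x = (1 : MulAut P) := by
    refine hPp.mulAut_eq_one_of_apply_eq_self hp ?_ hxp (v := ⟨w, hwP⟩) (by simpa using hw)
      (Subtype.ext ?_)
    · rw [← map_pow, pow_orderOf_eq_one, map_one]
    · simp [hxw.eq]
  refine hnc fun v hv ↦ mul_inv_eq_iff_eq_mul.1 ?_
  simpa using congrArg Subtype.val (DFunLike.congr_fun hσ ⟨v, hv⟩)

theorem orderOf_mul_of_not_centralizing {G : Type*} [Group G] [Fintype G] (p : ℕ)
    (hp : p.Prime) (P : Subgroup G) (hPnormal : P.Normal) (hPcyc : IsCyclic P)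
    (hPp : IsPGroup p P) (F : Subgroup G) (hcompl : P.IsComplement' F)
    (hcop : Nat.Coprime (Nat.card F) p)
    (u : G) (hu : u ∈ P) (x : G) (hx : x ∈ F)
    (hnc : ¬ ∀ v ∈ P, x * v = v * x) :
    orderOf (u * x) = orderOf x := by
  apply Nat.dvd_antisymm <;> apply orderOf_dvd_of_pow_eq_one
  · have hwP : (u * x) ^ orderOf x ∈ P := (P.mul_pow_mem_iff hu x _).2 (by simp [P.one_mem])
    have hwu : Commute ((u * x) ^ orderOf x) u := setLike_mul_comm hwP hu
    have hxw : Commute x ((u * x) ^ orderOf x) := by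
      simpa using (hwu.inv_right.mul_right (Commute.self_pow (u * x) _).symm).symm
    exact hPp.eq_one_of_commute_of_not_centralizing hp
      (hcop.coprime_dvd_left (Subgroup.orderOf_dvd_natCard F hx)) hnc hwP hxw
  · have hxP : x ^ orderOf (u * x) ∈ P :=
      (P.mul_pow_mem_iff hu x _).1 (by simp [pow_orderOf_eq_one, P.one_mem])
    exact hcompl.disjoint.le_bot ⟨hxP, F.pow_mem hx _⟩
end

section
/- Let G be a finite group satisfying G = P ⋊ F, where P is a normal cyclic p-group for some prime p, F is a nontrivial complement of P with |F| coprime to p, and let Z = C_F(P) be the centralizer of P in F. Then ψ(G) = ψ(P)·ψ(Z) + |P|·(∑_{x ∈ F \ Z} o(x)), and in particular ψ(G) < ψ(P)·ψ(Z) + |P|·ψ(F). -/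
/-- `psiSet s` is the sum of the orders of the elements of the subset `s` of the
finite group `G`. -/
noncomputable def psiSet {G : Type*} [Group G] [Fintype G] (s : Set G) : ℕ :=
  ∑ x ∈ s.toFinite.toFinset, orderOf x


/-!
Write each element of `G` uniquely as `a * x` with `a ∈ P` and `x ∈ F`. If `x` centralizes `P`,
then `a` and `x` commute and have coprime orders, so `o(a * x) = o(a) o(x)`. Otherwise, with
`n = o(x)`, conjugation by `x` is a power map `b ↦ b ^ u` on the cyclic group `P` with
`u ^ n ≡ 1` but `u ≢ 1` modulo `|P| = p ^ k`, and
`(a * x) ^ n = a ^ (1 + u + ⋯ + u ^ (n - 1))`. That geometric sum is divisible by `p ^ k`: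
if `p ∣ u - 1` it is `≡ n` modulo `p`, a unit, which would force `p ^ k ∣ u - 1`. Hence
`o(a * x) = o(x)`, and summing over the pairs `(a, x)` gives the formula; the inequality adds
the positive term `|P| ψ(Z)`.
-/

open Finset

theorem Int.prime_pow_dvd_geom_sum {p k n : ℕ} {u : ℤ} (hp : p.Prime) (hn : n.Coprime p)
    (hun : (p : ℤ) ^ k ∣ u ^ n - 1) (hu : ¬ (p : ℤ) ^ k ∣ u - 1) :
    (p : ℤ) ^ k ∣ ∑ i ∈ Finset.range n, u ^ i := by
  have hp' : Prime (p : ℤ) := Nat.prime_iff_prime_int.mp hp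
  rw [← geom_sum_mul] at hun
  by_cases hpu : (p : ℤ) ∣ u - 1
  · have hsum : ¬ (p : ℤ) ∣ ∑ i ∈ Finset.range n, u ^ i := by
      have hu1 : (u : ZMod p) = 1 := by
        rw [← sub_eq_zero, ← Int.cast_one, ← Int.cast_sub, ZMod.intCast_zmod_eq_zero_iff_dvd]
        exact hpu
      rw [← ZMod.intCast_zmod_eq_zero_iff_dvd]
      push_cast
      simp only [hu1, one_pow, sum_const, card_range, nsmul_eq_mul, mul_one]
      rw [ZMod.natCast_eq_zero_iff]
      exact (Nat.Prime.coprime_iff_not_dvd hp).mp hn.symm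
    exact absurd ((hp'.coprime_iff_not_dvd.mpr hsum).pow_left.dvd_of_dvd_mul_left hun) hu
  · exact (hp'.coprime_iff_not_dvd.mpr hpu).pow_left.dvd_of_dvd_mul_right hun

section Conj
variable {G : Type*} [Group G] {a x : G} {u : ℤ}

theorem mul_pow_eq_zpow_geom_sum_mul_pow (h : x * a * x⁻¹ = a ^ u) (n : ℕ) :
    (a * x) ^ n = a ^ (∑ i ∈ range n, u ^ i) * x ^ n := by
  induction n with
  | zero => simp
  | succ n ih =>
    have hx : x * a ^ (∑ i ∈ range n, u ^ i) = a ^ (u * ∑ i ∈ range n, u ^ i) * x := by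
      rw [zpow_mul, ← h, conj_zpow, inv_mul_cancel_right]
    rw [pow_succ', ih, geom_sum_succ, add_comm, zpow_one_add, pow_succ', mul_assoc,
      ← mul_assoc x, hx, mul_assoc, mul_assoc]

theorem pow_mul_mul_inv_pow_eq_zpow_pow (h : x * a * x⁻¹ = a ^ u) (n : ℕ) :
    x ^ n * a * (x ^ n)⁻¹ = a ^ (u ^ n) := by
  induction n with
  | zero => simp
  | succ n ih =>
    rw [pow_succ', pow_succ', zpow_mul, ← h, conj_zpow, ← ih]
    group

end Conj

theorem Subgroup.exists_conj_eq_zpow {G : Type*} [Group G] (P : Subgroup G) [P.Normal]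
    [IsCyclic P] (x : G) : ∃ u : ℤ, ∀ a ∈ P, x * a * x⁻¹ = a ^ u := by
  obtain ⟨u, hu⟩ := (MulAut.conjNormal x : MulAut P).toMonoidHom.map_cyclic
  exact ⟨u, fun a ha => by simpa using congrArg Subtype.val (hu ⟨a, ha⟩)⟩

theorem orderOf_mul_eq_of_notMem_centralizer {G : Type*} [Group G] {p : ℕ} [hp : Fact p.Prime]
    {P : Subgroup G} [P.Normal] [IsCyclic P] [Finite P] (hPp : IsPGroup p P) {a x : G}
    (ha : a ∈ P) (hx : x ∉ Subgroup.centralizer (P : Set G)) (hxp : (orderOf x).Coprime p)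
    (hdisj : Disjoint P (Subgroup.zpowers x)) :
    orderOf (a * x) = orderOf x := by
  obtain ⟨u, hu⟩ := P.exists_conj_eq_zpow x
  obtain ⟨k, hk⟩ := hPp.exists_card_eq
  have hdvd_card : ∀ b ∈ P, ∀ m : ℤ, (p : ℤ) ^ k ∣ m → b ^ m = 1 := fun b hb m hm =>
    orderOf_dvd_iff_zpow_eq_one.mp <| (Int.natCast_dvd_natCast.mpr
      (hk ▸ P.orderOf_dvd_natCard hb)).trans (by exact_mod_cast hm)
  have hun : (p : ℤ) ^ k ∣ u ^ orderOf x - 1 := by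
    obtain ⟨g, hg⟩ := IsCyclic.exists_ofOrder_eq_natCard (α := P)
    have := pow_mul_mul_inv_pow_eq_zpow_pow (hu g g.2) (orderOf x)
    rw [pow_orderOf_eq_one, one_mul, inv_one, mul_one] at this
    rw [← Nat.cast_pow, ← hk, ← hg, ← Subgroup.orderOf_coe, orderOf_dvd_iff_zpow_eq_one,
      zpow_sub_one, ← this, mul_inv_cancel]
  have hu1 : ¬ (p : ℤ) ^ k ∣ u - 1 := by
    refine fun h => hx (Subgroup.mem_centralizer_iff.mpr fun b hb => ?_)
    have hbu : b ^ u = b := by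
      rw [← mul_inv_eq_one, ← zpow_sub_one]
      exact hdvd_card b hb _ h
    exact (mul_inv_eq_iff_eq_mul.mp ((hu b hb).trans hbu)).symm
  have hpow : (a * x) ^ orderOf x = 1 := by
    rw [mul_pow_eq_zpow_geom_sum_mul_pow (hu a ha), pow_orderOf_eq_one, mul_one,
      hdvd_card a ha _ (Int.prime_pow_dvd_geom_sum hp.out hxp hun hu1)]
  refine Nat.dvd_antisymm (orderOf_dvd_of_pow_eq_one hpow) (orderOf_dvd_of_pow_eq_one ?_)
  have h1 := pow_orderOf_eq_one (a * x)
  rw [mul_pow_eq_zpow_geom_sum_mul_pow (hu a ha)] at h1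
  refine Subgroup.disjoint_def.mp hdisj ?_ (Subgroup.npow_mem_zpowers x _)
  rw [eq_inv_of_mul_eq_one_right h1]
  exact inv_mem (zpow_mem ha _)

theorem Set.Finite.sum_toFinset_eq_add_sum_toFinset_sdiff {α M : Type*} [AddCommMonoid M]
    {s t : Set α} (hs : s.Finite) (ht : t.Finite) (hts : t ⊆ s) (f : α → M) :
    ∑ x ∈ hs.toFinset, f x =
      ∑ x ∈ ht.toFinset, f x + ∑ x ∈ (hs.sdiff (t := t)).toFinset, f x := by
  classical
  rw [Set.Finite.toFinset_sdiff hs ht, add_comm,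
    sum_sdiff (Set.Finite.toFinset_subset_toFinset.mpr hts)]

theorem Subgroup.IsComplement'.sum_eq_sum_sum_mul {G M : Type*} [Group G] [Fintype G]
    [AddCommMonoid M] {P F : Subgroup G} [Fintype P] [Fintype F] (h : P.IsComplement' F)
    (f : G → M) : ∑ g, f g = ∑ a : P, ∑ x : F, f (a * x) := by
  rw [← h.equiv.symm.sum_comp, Fintype.sum_prod_type]
  simp only [IsComplement.equiv_symm_apply]
  rfl

section Psi

variable {G : Type*} [Group G] [Fintype G]

theorem psiSet_eq_add_psiSet_sdiff {s t : Set G} (hts : t ⊆ s) :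
    psiSet s = psiSet t + psiSet (s \ t) :=
  s.toFinite.sum_toFinset_eq_add_sum_toFinset_sdiff t.toFinite hts orderOf

theorem psiSet_subgroup (H : Subgroup G) [Fintype H] :
    psiSet (H : Set G) = ∑ a : H, orderOf (a : G) :=
  sum_subtype _ (fun _ => Set.Finite.mem_toFinset _) orderOf

theorem psiSet_subgroup_pos (H : Subgroup G) : 0 < psiSet (H : Set G) :=
  sum_pos' (fun _ _ => Nat.zero_le _)
    ⟨1, (Set.Finite.mem_toFinset _).mpr H.one_mem, by rw [orderOf_one]; exact Nat.one_pos⟩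

end Psi

section Semidirect

variable {G : Type*} [Group G] [Fintype G] {p : ℕ} [Fact p.Prime] {P F : Subgroup G}
  [P.Normal] [IsCyclic P]

theorem sum_orderOf_mul_mem_complement (hPp : IsPGroup p P) (hdisj : Disjoint P F)
    (hcop : (Nat.card F).Coprime p) [Fintype F] {a : G} (ha : a ∈ P) :
    ∑ x : F, orderOf (a * x) =
      orderOf a * psiSet ((F ⊓ Subgroup.centralizer (P : Set G) : Subgroup G) : Set G) +
        psiSet ((F : Set G) \ ((F ⊓ Subgroup.centralizer (P : Set G) : Subgroup G) : Set G)) := by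
  have hxp : ∀ x ∈ F, (orderOf x).Coprime p := fun x hx =>
    hcop.coprime_dvd_left (F.orderOf_dvd_natCard hx)
  rw [← sum_subtype (p := (· ∈ F)) _ (fun _ => Set.Finite.mem_toFinset (F : Set G).toFinite)
      (fun x => orderOf (a * x)),
    Set.Finite.sum_toFinset_eq_add_sum_toFinset_sdiff _ (Set.toFinite _) inf_le_left, psiSet,
    psiSet, mul_sum]
  congr 1
  · refine sum_congr rfl fun x hx => ?_
    obtain ⟨hxF, hxC⟩ := Subgroup.mem_inf.mp ((Set.Finite.mem_toFinset _).mp hx)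
    refine Commute.orderOf_mul_eq_mul_orderOf_of_coprime
      ((Subgroup.mem_centralizer_iff.mp hxC) a ha) ?_
    obtain ⟨k, hk⟩ := hPp.exists_card_eq
    exact ((hxp x hxF).pow_right k).symm.coprime_dvd_left (hk ▸ P.orderOf_dvd_natCard ha)
  · refine sum_congr rfl fun x hx => ?_
    obtain ⟨hxF, hxZ⟩ := (Set.Finite.mem_toFinset _).mp hx
    exact orderOf_mul_eq_of_notMem_centralizer hPp ha (fun hxC => hxZ ⟨hxF, hxC⟩) (hxp x hxF)
      (hdisj.mono_right ((Subgroup.zpowers_le).mpr hxF))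

end Semidirect

theorem psi_semidirect_formula_general {G : Type*} [Group G] [Fintype G] (p : ℕ)
    (hp : p.Prime) (P : Subgroup G) (hPnormal : P.Normal) (hPcyc : IsCyclic P)
    (hPp : IsPGroup p P) (F : Subgroup G) (hcompl : P.IsComplement' F)
    (hcop : Nat.Coprime (Nat.card F) p) :
    psi G = psiSet (P : Set G) *
        psiSet ((F ⊓ Subgroup.centralizer (P : Set G) : Subgroup G) : Set G) +
        Nat.card P *
          psiSet ((F : Set G) \
            ((F ⊓ Subgroup.centralizer (P : Set G) : Subgroup G) : Set G)) ∧
    psi G < psiSet (P : Set G) *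
        psiSet ((F ⊓ Subgroup.centralizer (P : Set G) : Subgroup G) : Set G) +
        Nat.card P * psiSet (F : Set G) := by
  classical
  have : Fact p.Prime := ⟨hp⟩
  set Z : Subgroup G := F ⊓ Subgroup.centralizer (P : Set G)
  have hformula : psi G = psiSet (P : Set G) * psiSet (Z : Set G) +
      Nat.card P * psiSet ((F : Set G) \ (Z : Set G)) := by
    rw [psi, hcompl.sum_eq_sum_sum_mul]
    simp_rw [fun a : P => sum_orderOf_mul_mem_complement hPp hcompl.disjoint hcop a.2]
    rw [sum_add_distrib, ← sum_mul, psiSet_subgroup P, sum_const, card_univ, smul_eq_mul,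
      Nat.card_eq_fintype_card]
  refine ⟨hformula, ?_⟩
  have hZ : 0 < Nat.card P * psiSet (Z : Set G) := Nat.mul_pos Nat.card_pos (psiSet_subgroup_pos Z)
  rw [hformula, psiSet_eq_add_psiSet_sdiff (show (Z : Set G) ⊆ F from inf_le_left)]
  lia

theorem psi_semidirect_formula {G : Type*} [Group G] [Fintype G] (p : ℕ)
    (hp : p.Prime) (P : Subgroup G) (hPnormal : P.Normal) (hPcyc : IsCyclic P)
    (hPp : IsPGroup p P) (F : Subgroup G) (hcompl : P.IsComplement' F)
    (hF : F ≠ ⊥) (hcop : Nat.Coprime (Nat.card F) p) :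
    psi G = psiSet (P : Set G) *
        psiSet ((F ⊓ Subgroup.centralizer (P : Set G) : Subgroup G) : Set G) +
        Nat.card P *
          psiSet ((F : Set G) \
            ((F ⊓ Subgroup.centralizer (P : Set G) : Subgroup G) : Set G)) ∧
    psi G < psiSet (P : Set G) *
        psiSet ((F ⊓ Subgroup.centralizer (P : Set G) : Subgroup G) : Set G) +
        Nat.card P * psiSet (F : Set G) :=
  psi_semidirect_formula_general p hp P hPnormal hPcyc hPp F hcompl hcop
end

section
/- Let G be a finite 2-group containing a cyclic subgroup of index 4. Then the second derived subgroup G'' is contained in the center Z(G). -/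
/-!
Let `N` be the normal core of the cyclic subgroup `H`. Then `N` is cyclic and `G ⧸ N` embeds in
the symmetric group on the four cosets of `H`; being a `2`-group, it has order dividing `8`, so
its commutator subgroup is cyclic. Since the automorphism group of the cyclic group `N` is
abelian, `G'` centralizes `N`. Hence `G' → (G ⧸ N)'` has cyclic image and kernel `G' ∩ N`
central in `G'`, so `G'` is abelian and in fact `G'' = 1`.
-/

open Subgroup

section

variable {G : Type*} [Group G]

theorem Subgroup.index_normalCore_dvd_factorial (H : Subgroup G) [H.FiniteIndex] :
    H.normalCore.index ∣ H.index.factorial := by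
  rw [normalCore_eq_ker, index_ker, index_eq_card, ← Nat.card_perm]
  exact card_subgroup_dvd_card (MulAction.toPermHom G (G ⧸ H)).range

/-- The automorphism group of a cyclic group is abelian, so commutators act trivially on `N`. -/
theorem commutator_le_centralizer_of_isCyclic (N : Subgroup G) [N.Normal] [IsCyclic N] :
    commutator G ≤ centralizer (N : Set G) := by
  let _ := (IsCyclic.mulAutMulEquiv N).toMonoidHom.commGroupOfInjective
    (IsCyclic.mulAutMulEquiv N).injective
  intro g hg n hn
  have hconj : g * n * g⁻¹ = n := by
    simpa using congrArg Subtype.val (DFunLike.congr_fun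
      (Abelianization.commutator_subset_ker (MulAut.conjNormal (H := N)) hg) (⟨n, hn⟩ : N))
  exact (mul_inv_eq_iff_eq_mul.mp hconj).symm

theorem commutator_commutator_eq_bot_of_le_centralizer {N : Subgroup G} [N.Normal]
    [IsCyclic (commutator (G ⧸ N))] (hN : commutator G ≤ centralizer (N : Set G)) :
    ⁅commutator G, commutator G⁆ = ⊥ := by
  let π := (QuotientGroup.mk' N).subgroupMap (commutator G)
  have hmap : (commutator G).map (QuotientGroup.mk' N) = commutator (G ⧸ N) := by
    rw [map_commutator_eq, QuotientGroup.range_mk', commutator_def]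
  have : IsCyclic ((commutator G).map (QuotientGroup.mk' N)) := hmap ▸ inferInstance
  rw [commutator_self_eq_bot_iff]
  refine π.isMulCommutative_of_isCyclic_of_ker_le_center
    fun k hk ↦ mem_center_iff.mpr fun m ↦ ?_
  rw [ker_subgroupMap, QuotientGroup.ker_mk', mem_subgroupOf] at hk
  exact Subtype.ext (hN m.2 k hk).symm

end

section

variable {Q : Type*} [Group Q] {p : ℕ} [hp : Fact p.Prime]

theorem isMulCommutative_of_card_dvd_prime_sq (hQ : Nat.card Q ∣ p ^ 2) :
    IsMulCommutative Q := by
  obtain ⟨n, hn, hcard⟩ := (Nat.dvd_prime_pow hp.out).mp hQ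
  interval_cases n
  · have := isCyclic_of_card_dvd_prime (p := p) (by rw [hcard]; simp)
    infer_instance
  · have := isCyclic_of_card_dvd_prime (p := p) (by rw [hcard]; simp)
    infer_instance
  · exact IsPGroup.isMulCommutative_of_card_eq_prime_sq hcard

theorem isCyclic_commutator_of_card_dvd_prime_pow_three (hQ : Nat.card Q ∣ p ^ 3) :
    IsCyclic (commutator Q) := by
  by_cases hcomm : IsMulCommutative Q
  · rw [commutator_eq_bot]
    infer_instance
  obtain ⟨n, hn, hcard⟩ := (Nat.dvd_prime_pow hp.out).mp hQ
  obtain rfl : n = 3 := by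
    by_contra h3
    exact hcomm <| isMulCommutative_of_card_dvd_prime_sq (p := p) <|
      hcard ▸ pow_dvd_pow p (by omega)
  obtain ⟨k, hk, hZ⟩ := IsPGroup.card_center_eq_prime_pow hcard (by norm_num)
  have hmul : Nat.card (Q ⧸ center Q) * p ^ k = p ^ 3 := by
    rw [← hZ, ← card_eq_card_quotient_mul_card_subgroup, hcard]
  -- `Q ⧸ center Q` is not cyclic, which forces the center to have order `p`
  obtain rfl : k = 1 := by
    by_contra hk1
    have : IsCyclic (Q ⧸ center Q) := isCyclic_of_card_dvd_prime (p := p) <|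
      Nat.dvd_of_mul_dvd_mul_right (pow_pos hp.out.pos 2) <|
        calc Nat.card (Q ⧸ center Q) * p ^ 2 ∣ Nat.card (Q ⧸ center Q) * p ^ k :=
              mul_dvd_mul_left _ (pow_dvd_pow p (by omega))
          _ = p * p ^ 2 := by rw [hmul]; ring
    exact hcomm (isMulCommutative_of_isCyclic_quotient_center_self Q)
  have hquot : IsMulCommutative (Q ⧸ center Q) :=
    isMulCommutative_of_card_dvd_prime_sq (p := p) <| dvd_of_eq <|
      Nat.eq_of_mul_eq_mul_right hp.out.pos (by rw [← pow_one p, hmul]; ring)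
  have : IsCyclic (center Q) := isCyclic_of_card_dvd_prime (p := p) (by simp [hZ])
  exact isCyclic_of_le (Normal.quotient_commutative_iff_commutator_le.mp hquot)

end

theorem two_group_cyclic_index_four_general {G : Type*} [Group G]
    (h2 : IsPGroup 2 G) (H : Subgroup G) (hHcyc : IsCyclic H) (hidx : H.index = 4) :
    derivedSeries G 2 ≤ Subgroup.center G := by
  have : Fact (Nat.Prime 2) := ⟨Nat.prime_two⟩
  have : H.FiniteIndex := ⟨by omega⟩
  let N := H.normalCore
  have : IsCyclic N := isCyclic_of_le H.normalCore_le
  have hN : Nat.card (G ⧸ N) ∣ 2 ^ 3 := by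
    obtain ⟨n, hn⟩ := h2.index N
    have h24 : N.index ∣ 8 * 3 := by
      simpa [hidx, Nat.factorial] using H.index_normalCore_dvd_factorial
    rw [← index_eq_card, hn]
    exact (Nat.Coprime.pow_left n (by norm_num)).dvd_of_dvd_mul_right (hn ▸ h24)
  have := isCyclic_commutator_of_card_dvd_prime_pow_three hN
  rw [derivedSeries_succ, derivedSeries_one,
    commutator_commutator_eq_bot_of_le_centralizer (commutator_le_centralizer_of_isCyclic N)]
  exact bot_le

theorem two_group_cyclic_index_four {G : Type*} [Group G] [Fintype G]
    (h2 : IsPGroup 2 G) (H : Subgroup G) (hHcyc : IsCyclic H) (hidx : H.index = 4) :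
    derivedSeries G 2 ≤ Subgroup.center G :=
  two_group_cyclic_index_four_general h2 H hHcyc hidx
end

section
/- Let p₂ < p₃ < ... < p_s be primes with p₂ > 3. Then the product ∏_{i=2}^{s} (p_i² - 1)/(p_i² + 1) is greater than 5/6. -/
/-!
Since `(p² - 1)/(p² + 1) = (1 - p⁻²)² / (1 - p⁻⁴)`, the Euler products for `ζ(2) = π²/6` and
`ζ(4) = π⁴/90` give `∏_p (p² - 1)/(p² + 1) = ζ(4)/ζ(2)² = 2/5` over all primes. Every factor lies
in `(0, 1)`, so a finite product over primes exceeds `2/5` (infinitely many primes are left out).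
Applying this to `{2, 3} ∪ S` and dividing by the factors `3/5` and `4/5` of `2` and `3` gives `5/6`.
-/

open Filter Real

theorem Nat.Primes.hasProd_one_sub_inv_pow_inv {k : ℕ} (hk : 1 < k) :
    HasProd (fun p : Nat.Primes => (1 - ((p : ℝ) ^ k)⁻¹)⁻¹) (∑' n : ℕ, ((n : ℝ) ^ k)⁻¹) := by
  let f : ℕ →*₀ ℝ := (invMonoidWithZeroHom.comp (powMonoidWithZeroHom (by omega : k ≠ 0))).comp
    (Nat.castRingHom ℝ).toMonoidWithZeroHom
  have hf (n : ℕ) : f n = ((n : ℝ) ^ k)⁻¹ := rfl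
  have hsum : Summable (‖f ·‖) := by
    simpa only [hf, norm_inv, norm_pow, Real.norm_natCast] using Real.summable_nat_pow_inv.mpr hk
  simpa only [hf] using EulerProduct.eulerProduct_completely_multiplicative_hasProd hsum

theorem sq_sub_one_div_sq_add_one_eq {x : ℝ} (hx0 : x ≠ 0) (hx1 : x ^ 2 ≠ 1) :
    (x ^ 2 - 1) / (x ^ 2 + 1) = (1 - (x ^ 4)⁻¹)⁻¹ / ((1 - (x ^ 2)⁻¹)⁻¹ * (1 - (x ^ 2)⁻¹)⁻¹) := by
  have h2 : x ^ 2 - 1 ≠ 0 := sub_ne_zero.mpr hx1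
  have h4 : x ^ 4 - 1 ≠ 0 := by
    rw [show x ^ 4 - 1 = (x ^ 2 - 1) * (x ^ 2 + 1) by ring]
    exact mul_ne_zero h2 (by positivity)
  field_simp
  ring

theorem sq_sub_one_div_sq_add_one_lt_one (x : ℝ) : (x ^ 2 - 1) / (x ^ 2 + 1) < 1 :=
  (div_lt_one (by positivity)).mpr (by linarith)

theorem sq_sub_one_div_sq_add_one_pos {x : ℝ} (hx : 1 < x ^ 2) : 0 < (x ^ 2 - 1) / (x ^ 2 + 1) :=
  div_pos (by linarith) (by positivity)

theorem Nat.Primes.hasProd_sq_sub_one_div_sq_add_one :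
    HasProd (fun p : Nat.Primes => ((p : ℝ) ^ 2 - 1) / ((p : ℝ) ^ 2 + 1)) (2 / 5) := by
  have hζ2 := Nat.Primes.hasProd_one_sub_inv_pow_inv one_lt_two
  have hζ4 := Nat.Primes.hasProd_one_sub_inv_pow_inv (by norm_num : 1 < 4)
  rw [show ∑' n : ℕ, ((n : ℝ) ^ 2)⁻¹ = π ^ 2 / 6 by
    simpa only [one_div] using hasSum_zeta_two.tsum_eq] at hζ2
  rw [show ∑' n : ℕ, ((n : ℝ) ^ 4)⁻¹ = π ^ 4 / 90 by
    simpa only [one_div] using hasSum_zeta_four.tsum_eq] at hζ4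
  have key := hζ4.div₀ (hζ2.mul hζ2) (by positivity)
  rw [show π ^ 4 / 90 / (π ^ 2 / 6 * (π ^ 2 / 6)) = 2 / 5 by field_simp; ring] at key
  refine key.congr_fun fun p => ?_
  have hp : (2 : ℝ) ≤ p := by exact_mod_cast p.prop.two_le
  exact sq_sub_one_div_sq_add_one_eq (by positivity) (by nlinarith)

theorem HasProd.le_prod {ι : Type*} {f : ι → ℝ} {a : ℝ} (hf : HasProd f a)
    (hf0 : ∀ i, 0 ≤ f i) (hf1 : ∀ i, f i ≤ 1) (s : Finset ι) : a ≤ ∏ i ∈ s, f i :=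
  le_of_tendsto hf <| (eventually_ge_atTop s).mono fun _ hst =>
    Finset.prod_le_prod_of_subset_of_le_one hst (fun i _ => hf0 i) fun i _ _ => hf1 i

theorem HasProd.lt_prod_of_notMem {ι : Type*} {f : ι → ℝ} {a : ℝ} (hf : HasProd f a)
    (hf0 : ∀ i, 0 < f i) (hf1 : ∀ i, f i ≤ 1) {s : Finset ι} {j : ι} (hj : j ∉ s)
    (hj1 : f j < 1) : a < ∏ i ∈ s, f i := by
  classical
  calc a ≤ ∏ i ∈ insert j s, f i := hf.le_prod (fun i => (hf0 i).le) hf1 _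
    _ = f j * ∏ i ∈ s, f i := Finset.prod_insert hj
    _ < ∏ i ∈ s, f i := mul_lt_of_lt_one_left (Finset.prod_pos fun i _ => hf0 i) hj1

theorem two_fifths_lt_prod_sq_sub_one_div_sq_add_one {S : Finset ℕ} (hS : ∀ q ∈ S, q.Prime) :
    (2 / 5 : ℝ) < ∏ q ∈ S, ((q : ℝ) ^ 2 - 1) / ((q : ℝ) ^ 2 + 1) := by
  have hpos (p : Nat.Primes) : 0 < ((p : ℝ) ^ 2 - 1) / ((p : ℝ) ^ 2 + 1) := by
    have hp : (2 : ℝ) ≤ p := by exact_mod_cast p.prop.two_le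
    exact sq_sub_one_div_sq_add_one_pos (by nlinarith)
  obtain ⟨j, hj⟩ : ∃ j : Nat.Primes, j ∉ S.subtype Nat.Prime := Infinite.exists_notMem_finset _
  have h := Nat.Primes.hasProd_sq_sub_one_div_sq_add_one.lt_prod_of_notMem hpos
    (fun p => (sq_sub_one_div_sq_add_one_lt_one _).le) hj (sq_sub_one_div_sq_add_one_lt_one _)
  rwa [← Finset.filter_true_of_mem hS, ← Finset.prod_subtype_eq_prod_filter]

theorem prod_sq_sub_one_div_sq_add_one_gt (S : Finset ℕ)
    (hS : ∀ q ∈ S, q.Prime ∧ 3 < q) :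
    (5 / 6 : ℚ) < ∏ q ∈ S, ((q : ℚ) ^ 2 - 1) / ((q : ℚ) ^ 2 + 1) := by
  have h2 : 2 ∉ insert 3 S := by grind
  have h3 : 3 ∉ S := fun h => (hS 3 h).2.false
  have hprimes : ∀ q ∈ insert 2 (insert 3 S), q.Prime := by
    simpa [Nat.prime_two, Nat.prime_three] using fun q hq => (hS q hq).1
  have h := two_fifths_lt_prod_sq_sub_one_div_sq_add_one hprimes
  rw [Finset.prod_insert h2, Finset.prod_insert h3] at h
  norm_num only [Nat.cast_ofNat] at h
  rw [← Rat.cast_lt (K := ℝ)]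
  push_cast
  linarith
end
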